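/- The hypersymplectic moment map φ : ℂ² → ℝ × ℂ, φ(z,w) = (½(|z|² + |w|²), i·z·w̄), has image exactly the solid cone {(a,b) ∈ ℝ × ℂ : a ≥ |b|}, and the induced map on ℂ²/S¹ (for the action e^{iθ}·(z,w) = (e^{iθ}z, e^{iθ}w)) is two-to-one over the interior {a > |b|} and one-to-one over the boundary {a = |b|}. -/

import Mathlib

/-!
The moment map `φ(z, w) = (a, b)` records `‖z‖² + ‖w‖² = 2a` and `‖z‖ ‖w‖ = ‖b‖`, so `a ≥ ‖b‖`
and the unordered pair `{‖z‖, ‖w‖}` is determined by `(a, b)`; the two norms agree exactly when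
`a = ‖b‖`. Once `‖z‖` is fixed as well, the phase of `z w̄ = -i b` pins down `(z, w)` up to the
diagonal circle action. Hence a fibre consists of the orbits with `‖z‖` equal to one of the two
norms, and the involution `(z, w) ↦ (w̄, z̄)`, which preserves `φ`, exchanges them.
-/

open ComplexConjugate MulAction

lemma Circle.exists_mul_eq_of_norm_eq {x y : ℂ} (h : ‖x‖ = ‖y‖) :
    ∃ u : Circle, u * x = y := by
  rcases eq_or_ne x 0 with rfl | hx
  · exact ⟨1, by simpa [eq_comm] using h⟩
  · refine ⟨⟨y / x, mem_sphere_zero_iff_norm.2 ?_⟩, div_mul_cancel₀ y hx⟩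
    rw [norm_div, h, div_self (h ▸ norm_ne_zero_iff.2 hx)]

lemma eq_or_eq_of_sq_add_sq_eq_of_mul_eq {x y x' y' : ℝ} (hx : 0 ≤ x) (hy : 0 ≤ y)
    (hx' : 0 ≤ x') (hy' : 0 ≤ y') (hsq : x ^ 2 + y ^ 2 = x' ^ 2 + y' ^ 2)
    (hmul : x * y = x' * y') : x = x' ∨ x = y' := by
  have hsum : x + y = x' + y' := by
    refine (pow_left_inj₀ (by positivity) (by positivity) two_ne_zero).1 ?_
    linear_combination hsq + 2 * hmul
  -- `x` is a root of `X² - (x' + y') X + x' y'`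
  have hroot : (x - x') * (x - y') = 0 := by linear_combination x * hsum - hmul
  rcases mul_eq_zero.1 hroot with h | h
  · exact Or.inl (sub_eq_zero.1 h)
  · exact Or.inr (sub_eq_zero.1 h)

namespace Hypersymplectic

noncomputable def momentMap (p : ℂ × ℂ) : ℝ × ℂ :=
  ((1 / 2 : ℝ) * (‖p.1‖ ^ 2 + ‖p.2‖ ^ 2), Complex.I * p.1 * conj p.2)

def conjSwap (p : ℂ × ℂ) : ℂ × ℂ := (conj p.2, conj p.1)

lemma norm_momentMap_snd (p : ℂ × ℂ) : ‖(momentMap p).2‖ = ‖p.1‖ * ‖p.2‖ := by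
  simp [momentMap]

lemma momentMap_fst_sub_norm_snd (p : ℂ × ℂ) :
    (momentMap p).1 - ‖(momentMap p).2‖ = (1 / 2 : ℝ) * (‖p.1‖ - ‖p.2‖) ^ 2 := by
  rw [norm_momentMap_snd, momentMap]; ring

lemma norm_momentMap_snd_le (p : ℂ × ℂ) : ‖(momentMap p).2‖ ≤ (momentMap p).1 := by
  have := momentMap_fst_sub_norm_snd p
  nlinarith [sq_nonneg (‖p.1‖ - ‖p.2‖)]

lemma norm_momentMap_snd_eq_iff (p : ℂ × ℂ) :
    ‖(momentMap p).2‖ = (momentMap p).1 ↔ ‖p.1‖ = ‖p.2‖ := by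
  have := momentMap_fst_sub_norm_snd p
  constructor
  · intro h
    have : (‖p.1‖ - ‖p.2‖) ^ 2 = 0 := by linarith
    exact sub_eq_zero.1 (pow_eq_zero_iff two_ne_zero |>.1 this)
  · intro h
    rw [h, sub_self] at this
    linarith

@[simp] lemma momentMap_smul (u : Circle) (p : ℂ × ℂ) : momentMap (u • p) = momentMap p := by
  obtain ⟨z, w⟩ := p
  have hu : (u : ℂ) * conj (u : ℂ) = 1 := by
    rw [Complex.mul_conj, Circle.normSq_coe, Complex.ofReal_one]
  simp only [momentMap, Prod.smul_mk, Circle.smul_def, smul_eq_mul, norm_mul, Circle.norm_coe,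
    one_mul, map_mul]
  congr 1
  linear_combination Complex.I * z * conj w * hu

@[simp] lemma momentMap_conjSwap (p : ℂ × ℂ) : momentMap (conjSwap p) = momentMap p := by
  simp only [momentMap, conjSwap, Complex.norm_conj, Complex.conj_conj]
  congr 1 <;> ring

lemma mem_orbit_iff {p q : ℂ × ℂ} :
    q ∈ orbit Circle p ↔ ‖p.1‖ = ‖q.1‖ ∧ momentMap p = momentMap q := by
  constructor
  · rintro ⟨u, rfl⟩
    exact ⟨(Circle.norm_smul u p.1).symm, (momentMap_smul u p).symm⟩
  rintro ⟨h1, hφ⟩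
  obtain ⟨hsq, hprod⟩ := Prod.ext_iff.1 hφ
  simp only [momentMap] at hsq hprod
  have h2 : ‖p.2‖ = ‖q.2‖ :=
    (pow_left_inj₀ (norm_nonneg _) (norm_nonneg _) two_ne_zero).1 (by rw [h1] at hsq; linarith)
  rcases eq_or_ne p.1 0 with hp | hp
  · have hq : q.1 = 0 := norm_eq_zero.1 (by rw [← h1, hp, norm_zero])
    obtain ⟨u, hu⟩ := Circle.exists_mul_eq_of_norm_eq h2
    exact ⟨u, Prod.ext (by simp [Circle.smul_def, hp, hq]) hu⟩
  · obtain ⟨u, hu⟩ := Circle.exists_mul_eq_of_norm_eq h1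
    refine ⟨u, Prod.ext hu ?_⟩
    have hconj : conj p.2 = u * conj q.2 := by
      refine mul_left_cancel₀ (mul_ne_zero Complex.I_ne_zero hp) ?_
      rw [hprod, ← hu]; ring
    have hu1 : conj (u : ℂ) * u = 1 := by
      rw [Complex.conj_mul', Circle.norm_coe]; norm_num
    have := congrArg conj hconj
    simp only [Complex.conj_conj, map_mul] at this
    show (u : ℂ) * p.2 = q.2
    linear_combination (u : ℂ) * this + q.2 * hu1

lemma norm_fst_eq_or_of_momentMap_eq {p q : ℂ × ℂ} (h : momentMap p = momentMap q) :
    ‖q.1‖ = ‖p.1‖ ∨ ‖q.1‖ = ‖p.2‖ := by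
  have hmul := norm_momentMap_snd q
  rw [← h, norm_momentMap_snd] at hmul
  refine eq_or_eq_of_sq_add_sq_eq_of_mul_eq (norm_nonneg _) (norm_nonneg _) (norm_nonneg _)
    (norm_nonneg _) ?_ hmul.symm
  have := congrArg Prod.fst h
  simp only [momentMap] at this
  linarith

lemma mem_orbit_or_mem_orbit_conjSwap_of_momentMap_eq {p q : ℂ × ℂ}
    (h : momentMap q = momentMap p) : q ∈ orbit Circle p ∨ q ∈ orbit Circle (conjSwap p) := by
  rcases norm_fst_eq_or_of_momentMap_eq h.symm with h1 | h1
  · exact .inl (mem_orbit_iff.2 ⟨h1.symm, h.symm⟩)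
  · refine .inr (mem_orbit_iff.2 ⟨?_, by rw [momentMap_conjSwap, h]⟩)
    rw [h1, conjSwap, Complex.norm_conj]

lemma momentMap_ofReal_mk {r : ℝ} (hr : r ≠ 0) (b : ℂ) :
    momentMap (r, Complex.I * conj b / r) = ((1 / 2 : ℝ) * (r ^ 2 + ‖b‖ ^ 2 / r ^ 2), b) := by
  have hr' : (r : ℂ) ≠ 0 := Complex.ofReal_ne_zero.2 hr
  simp only [momentMap, Complex.norm_real, Real.norm_eq_abs, sq_abs, norm_div, norm_mul,
    Complex.norm_I, Complex.norm_conj, one_mul, div_pow, map_div₀, map_mul, Complex.conj_conj,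
    Complex.conj_I, Complex.conj_ofReal]
  congr 1
  field_simp
  linear_combination (-b) * Complex.I_sq

lemma range_momentMap : Set.range momentMap = {c : ℝ × ℂ | ‖c.2‖ ≤ c.1} := by
  refine (Set.range_subset_iff.2 norm_momentMap_snd_le).antisymm ?_
  rintro ⟨a, b⟩ (hb : ‖b‖ ≤ a)
  rcases ((norm_nonneg b).trans hb).eq_or_lt with rfl | ha
  · exact ⟨0, by simp [momentMap, norm_le_zero_iff.1 hb]⟩
  -- `a ± t` are the roots of `X² - 2aX + ‖b‖²`, i.e. the values of `‖z‖²` and `‖w‖²`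
  set t := √(a ^ 2 - ‖b‖ ^ 2)
  have ht : t ^ 2 = a ^ 2 - ‖b‖ ^ 2 := Real.sq_sqrt (by nlinarith [norm_nonneg b])
  have hs : 0 < a + t := by positivity
  have hr : √(a + t) ^ 2 = a + t := Real.sq_sqrt hs.le
  refine ⟨(√(a + t), Complex.I * conj b / √(a + t)), ?_⟩
  rw [momentMap_ofReal_mk (Real.sqrt_pos.2 hs).ne', hr]
  congr 1
  field_simp
  nlinarith

lemma exists_two_orbits_of_norm_lt {c : ℝ × ℂ} (hc : ‖c.2‖ < c.1) :
    ∃ p q : ℂ × ℂ, momentMap p = c ∧ momentMap q = c ∧ q ∉ orbit Circle p ∧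
      ∀ r, momentMap r = c → r ∈ orbit Circle p ∨ r ∈ orbit Circle q := by
  obtain ⟨p, rfl⟩ : c ∈ Set.range momentMap := range_momentMap ▸ hc.le
  refine ⟨p, conjSwap p, rfl, momentMap_conjSwap p, fun h => hc.ne ?_,
    fun r => mem_orbit_or_mem_orbit_conjSwap_of_momentMap_eq⟩
  rw [norm_momentMap_snd_eq_iff]
  simpa [conjSwap] using (mem_orbit_iff.1 h).1

lemma mem_orbit_of_norm_eq {c : ℝ × ℂ} (hc : ‖c.2‖ = c.1) {p q : ℂ × ℂ}
    (hp : momentMap p = c) (hq : momentMap q = c) : q ∈ orbit Circle p := by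
  subst hp
  have hpn : ‖p.1‖ = ‖p.2‖ := (norm_momentMap_snd_eq_iff p).1 hc
  refine mem_orbit_iff.2 ⟨?_, hq.symm⟩
  rcases norm_fst_eq_or_of_momentMap_eq hq.symm with h | h
  exacts [h.symm, hpn.trans h.symm]

end Hypersymplectic

open Hypersymplectic

/-- The hypersymplectic moment map `φ(z,w) = (½(|z|² + |w|²), i·z·w̄)` on ℂ²
has image exactly the solid cone `{(a,b) ∈ ℝ × ℂ : a ≥ |b|}`; for the diagonal
circle action `u·(z,w) = (uz, uw)` the induced map on `ℂ²/S¹` is two-to-one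
over the interior `{a > |b|}` (each fibre is exactly two circle orbits) and
one-to-one over the boundary `{a = |b|}` (each fibre is a single orbit). -/
theorem stmt_18
    (φ : ℂ × ℂ → ℝ × ℂ)
    (hφ : φ = fun p => ((1 / 2 : ℝ) * (‖p.1‖ ^ 2 + ‖p.2‖ ^ 2),
      Complex.I * p.1 * (starRingEnd ℂ p.2)))
    (orb : ℂ × ℂ → ℂ × ℂ → Prop)
    (horb : orb = fun p q => ∃ u : Circle, ((u : ℂ) * p.1, (u : ℂ) * p.2) = q) :
    (Set.range φ = {c : ℝ × ℂ | ‖c.2‖ ≤ c.1}) ∧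
    (∀ c : ℝ × ℂ, ‖c.2‖ < c.1 →
      ∃ p q : ℂ × ℂ, φ p = c ∧ φ q = c ∧ ¬ orb p q ∧
        ∀ r : ℂ × ℂ, φ r = c → orb p r ∨ orb q r) ∧
    (∀ c : ℝ × ℂ, ‖c.2‖ = c.1 →
      ∀ p q : ℂ × ℂ, φ p = c → φ q = c → orb p q) := by
  subst hφ horb
  exact ⟨range_momentMap, fun _ => exists_two_orbits_of_norm_lt,
    fun _ hc _ _ => mem_orbit_of_norm_eq hc⟩
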